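/- Let β, N₀, κ, P, B, M > 0 and μ, D₀, ν, η ≥ 0 be real numbers with μ + D₀M > 0, and define EE(P, B, M) = B·log₂(1 + MPβ/(BN₀)) / (P/κ + μ + (D₀ + νB)M + ηB·log₂(1 + MPβ/(BN₀))). Then for every real c > 1, EE(cP, cB, M) > EE(P, B, M). -/
import Mathlib


/-- The energy efficiency as a function of the transmit power `P`, bandwidth `B`, and
(real-valued) number of antennas `M`. -/
noncomputable def EE12 (β N₀ κ μ D₀ ν η P B M : ℝ) : ℝ :=
  B * Real.logb 2 (1 + M * P * β / (B * N₀)) /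
    (P / κ + μ + (D₀ + ν * B) * M +
      η * B * Real.logb 2 (1 + M * P * β / (B * N₀)))

/-- The scaling inequality at the core of Theorem 4 of the paper: if `μ + D₀ M > 0`, then
jointly scaling `P` and `B` by any factor `c > 1` strictly increases the energy
efficiency. -/
theorem stmt_12 (β N₀ κ P B M μ D₀ ν η : ℝ)
    (hβ : 0 < β) (hN : 0 < N₀) (hκ : 0 < κ) (hP : 0 < P) (hB : 0 < B) (hM : 0 < M)
    (hμ : 0 ≤ μ) (hD : 0 ≤ D₀) (hν : 0 ≤ ν) (hη : 0 ≤ η)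
    (hfix : 0 < μ + D₀ * M) :
    ∀ c : ℝ, 1 < c →
      EE12 β N₀ κ μ D₀ ν η P B M < EE12 β N₀ κ μ D₀ ν η (c * P) (c * B) M := by
  intro c hc
  have hc0 : (0:ℝ) < c := lt_trans one_pos hc
  have hratio : M * (c * P) * β / (c * B * N₀) = M * P * β / (B * N₀) := by
    field_simp
  have hargpos : 0 < M * P * β / (B * N₀) :=
    div_pos (mul_pos (mul_pos hM hP) hβ) (mul_pos hB hN)
  set L := Real.logb 2 (1 + M * P * β / (B * N₀)) with hL
  have hLpos : 0 < L := Real.logb_pos one_lt_two (by linarith)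
  have hApos : 0 < P / κ + ν * B * M + η * B * L := by
    have := div_pos hP hκ
    have h1 : 0 ≤ ν * B * M := by positivity
    have h2 : 0 ≤ η * B * L := by positivity
    linarith
  set A := P / κ + ν * B * M + η * B * L with hA
  set F := μ + D₀ * M with hF
  unfold EE12
  rw [hratio, ← hL]
  have hd1 : P / κ + μ + (D₀ + ν * B) * M + η * B * L = A + F := by
    rw [hA, hF]; ring
  have hd2 : c * P / κ + μ + (D₀ + ν * (c * B)) * M + η * (c * B) * L
      = c * A + F := by
    rw [hA, hF]; ring
  rw [hd1, hd2]
  rw [div_lt_div_iff₀ (by linarith) (by nlinarith)]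
  have hNpos : 0 < B * L := mul_pos hB hLpos
  nlinarith [mul_pos hNpos hfix]
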